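/- Let 0 < μ_b < μ < 1 and for N ≥ 1 define ρ_N(n) = μ^{|n|} for |n| < N and ρ_N(n) = μ^N for |n| ≥ N. Then there is a constant C, independent of N, such that sup_{n∈ℤ} Σ_{m∈ℤ} ρ_N(n)⁻¹ (μ_b^{|m−n+1|} + μ_b^{|m−n−1|}) ρ_N(m) ≤ C. -/
import Mathlib
set_option maxHeartbeats 1000000


/-- weighted summability estimate, uniform in the cutoff `N` and
in `n`: with `ρ_N(n) = μ^{|n|}` for `|n| < N`, `μ^N` otherwise, the sums
`Σ_m ρ_N(n)⁻¹ (μ_b^{|m−n+1|} + μ_b^{|m−n−1|}) ρ_N(m)` are bounded by a constant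
independent of `n` and `N`. -/
theorem weighted_convolution_bound (μb μ : ℝ) (h0 : 0 < μb) (h1 : μb < μ)
    (h2 : μ < 1) :
    ∃ C : ℝ, 0 < C ∧ ∀ N : ℕ, 1 ≤ N → ∀ n : ℤ,
      Summable (fun m : ℤ =>
        (if n.natAbs < N then μ ^ n.natAbs else μ ^ N)⁻¹ *
          (μb ^ (m - n + 1).natAbs + μb ^ (m - n - 1).natAbs) *
          (if m.natAbs < N then μ ^ m.natAbs else μ ^ N)) ∧
      (∑' m : ℤ,
        (if n.natAbs < N then μ ^ n.natAbs else μ ^ N)⁻¹ *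
          (μb ^ (m - n + 1).natAbs + μb ^ (m - n - 1).natAbs) *
          (if m.natAbs < N then μ ^ m.natAbs else μ ^ N)) ≤ C := by
  have hμ0 : 0 < μ := h0.trans h1
  have hb1 : μb < 1 := h1.trans h2
  set r : ℝ := μb / μ with hr
  have hr0 : 0 < r := div_pos h0 hμ0
  have hr1 : r < 1 := (div_lt_one hμ0).2 h1
  -- the base geometric-type sum over ℤ
  have hSnat : Summable (fun k : ℕ => r ^ k) := summable_geometric_of_lt_one hr0.le hr1
  have hS : Summable (fun k : ℤ => r ^ k.natAbs) := by
    refine Summable.of_nat_of_neg ?_ ?_ <;> simpa using hSnat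
  refine ⟨(2 / μb) * ∑' k : ℤ, r ^ k.natAbs, ?_, ?_⟩
  · have hpos : 0 < ∑' k : ℤ, r ^ k.natAbs :=
      Summable.tsum_pos hS (fun k => by positivity) 0 (by norm_num)
    positivity
  intro N hN n
  -- the bounding function
  have hg : Summable (fun m : ℤ => (2 / μb) * r ^ (m - n).natAbs) := by
    have h := (hS.mul_left (2 / μb))
    have heq : (fun m : ℤ => (2 / μb) * r ^ (m - n).natAbs)
        = (fun k : ℤ => (2 / μb) * r ^ k.natAbs) ∘ (Equiv.subRight n) := rfl
    rw [heq, (Equiv.subRight n).summable_iff]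
    exact h
  have hif : ∀ k : ℤ, (if k.natAbs < N then μ ^ k.natAbs else μ ^ N)
      = μ ^ min k.natAbs N := by
    intro k
    split_ifs with h
    · rw [min_eq_left h.le]
    · rw [min_eq_right (le_of_not_gt h)]
  have hnonneg : ∀ m : ℤ,
      0 ≤ (if n.natAbs < N then μ ^ n.natAbs else μ ^ N)⁻¹ *
          (μb ^ (m - n + 1).natAbs + μb ^ (m - n - 1).natAbs) *
          (if m.natAbs < N then μ ^ m.natAbs else μ ^ N) := by
    intro m
    rw [hif n, hif m]
    positivity
  have key : ∀ m : ℤ,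
      (if n.natAbs < N then μ ^ n.natAbs else μ ^ N)⁻¹ *
          (μb ^ (m - n + 1).natAbs + μb ^ (m - n - 1).natAbs) *
          (if m.natAbs < N then μ ^ m.natAbs else μ ^ N)
        ≤ (2 / μb) * r ^ (m - n).natAbs := by
    intro m
    rw [hif n, hif m]
    set d := (m - n).natAbs with hd
    set mn := min n.natAbs N with hmn
    set mm := min m.natAbs N with hmm
    have htri : n.natAbs ≤ m.natAbs + d := by
      have := Int.natAbs_sub_le m (m - n)
      simpa [hd] using this
    have hexp : mn ≤ mm + d := by
      simp only [hmn, hmm]; omega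
    have hpowA : μ ^ mm * μ ^ d ≤ μ ^ mn := by
      rw [← pow_add]
      exact pow_le_pow_of_le_one hμ0.le h2.le hexp
    -- bound the middle factor
    have hB : μb ^ (m - n + 1).natAbs + μb ^ (m - n - 1).natAbs
        ≤ 2 * (μb ^ d / μb) := by
      have hlem : ∀ a : ℕ, d ≤ a + 1 → μb ^ a ≤ μb ^ d / μb := by
        intro a ha
        rw [le_div_iff₀ h0]
        calc μb ^ a * μb = μb ^ (a + 1) := by ring
          _ ≤ μb ^ d := pow_le_pow_of_le_one h0.le hb1.le ha
      have h1' : d ≤ (m - n + 1).natAbs + 1 := by omega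
      have h2' : d ≤ (m - n - 1).natAbs + 1 := by omega
      have := hlem _ h1'
      have := hlem _ h2'
      linarith
    -- combine
    have hfrac : (μ ^ mn)⁻¹ * μ ^ mm ≤ (μ ^ d)⁻¹ := by
      rw [inv_mul_le_iff₀ (by positivity), ← div_eq_mul_inv,
        le_div_iff₀ (by positivity)]
      exact hpowA
    have hBnn : 0 ≤ μb ^ (m - n + 1).natAbs + μb ^ (m - n - 1).natAbs := by positivity
    calc (μ ^ mn)⁻¹ * (μb ^ (m - n + 1).natAbs + μb ^ (m - n - 1).natAbs) * μ ^ mm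
        = (μb ^ (m - n + 1).natAbs + μb ^ (m - n - 1).natAbs) * ((μ ^ mn)⁻¹ * μ ^ mm) := by
          ring
      _ ≤ (2 * (μb ^ d / μb)) * (μ ^ d)⁻¹ := by
          apply mul_le_mul hB hfrac (by positivity) (by positivity)
      _ = (2 / μb) * r ^ d := by
          rw [hr, div_pow]
          field_simp
  have hF : Summable (fun m : ℤ =>
      (if n.natAbs < N then μ ^ n.natAbs else μ ^ N)⁻¹ *
        (μb ^ (m - n + 1).natAbs + μb ^ (m - n - 1).natAbs) *
        (if m.natAbs < N then μ ^ m.natAbs else μ ^ N)) :=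
    Summable.of_nonneg_of_le hnonneg key hg
  refine ⟨hF, ?_⟩
  calc (∑' m : ℤ, _) ≤ ∑' m : ℤ, (2 / μb) * r ^ (m - n).natAbs :=
        Summable.tsum_le_tsum key hF hg
    _ = (2 / μb) * ∑' m : ℤ, r ^ (m - n).natAbs := tsum_mul_left
    _ = (2 / μb) * ∑' k : ℤ, r ^ k.natAbs := by
        congr 1
        exact (Equiv.subRight n).tsum_eq (fun k : ℤ => r ^ k.natAbs)
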